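/- arXiv:2310.03758 — 3 statements merged into one kernel-verified Lean document; each statement's English description precedes it below -/
import Mathlib

section
/- Let a ~ N(0, I_n) be a standard Gaussian random vector in R^n and let x be a unit vector in R^n. Then E[sign(a^T x) · a] = sqrt(2/π) · x. -/
/-!
Write `v = ⟪x, v⟫ • x + w` with `w ⟂ x`. Under the standard Gaussian measure, `⟪x, a⟫ ~ N(0, 1)`
and `⟪w, a⟫` are jointly Gaussian and uncorrelated, hence independent, so
`E[sign ⟪x, a⟫ * ⟪w, a⟫] = E[sign ⟪x, a⟫] * E[⟪w, a⟫] = 0`, while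
`E[sign ⟪x, a⟫ * ⟪x, a⟫] = E|Z| = √(2 / π)`. The coordinate statement is the case `v = eᵢ`.
-/

open MeasureTheory ProbabilityTheory Real

/-- The standard Gaussian measure `N(0, I_n)` on `ℝⁿ`. -/
noncomputable def stdGaussian (n : ℕ) : Measure (Fin n → ℝ) :=
  Measure.pi fun _ : Fin n => gaussianReal 0 1

open Set
open scoped RealInnerProductSpace

@[fun_prop]
lemma Real.measurable_sign : Measurable Real.sign :=
  measurable_const.ite measurableSet_Iio (measurable_const.ite measurableSet_Ioi measurable_const)

lemma Real.sign_mul_self_eq_abs (r : ℝ) : Real.sign r * r = |r| := by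
  rcases lt_trichotomy r 0 with h | rfl | h
  · rw [sign_of_neg h, abs_of_neg h]; ring
  · simp
  · rw [sign_of_pos h, abs_of_pos h]; ring

lemma Real.abs_sign_le_one (r : ℝ) : |Real.sign r| ≤ 1 := by
  rcases sign_apply_eq r with h | h | h <;> simp [h]

lemma integral_Ioi_mul_exp_neg_mul_sq {b : ℝ} (hb : 0 < b) :
    ∫ x in Ioi 0, x * exp (-b * x ^ 2) = (2 * b)⁻¹ := by
  rw [← Complex.ofReal_inj]
  convert integral_mul_cexp_neg_mul_sq (b := (b : ℂ)) (by simpa using hb) using 1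
  · rw [← integral_complex_ofReal]; push_cast; rfl
  · push_cast; rfl

lemma integral_abs_gaussianReal : ∫ t, |t| ∂gaussianReal 0 1 = √(2 / π) := by
  have hpdf : ∀ t : ℝ, gaussianPDFReal 0 1 t • |t|
      = (√(2 * π))⁻¹ * (|t| * exp (-(1 / 2) * |t| ^ 2)) := fun t ↦ by
    simp only [gaussianPDFReal_def, NNReal.coe_one, mul_one, sub_zero, smul_eq_mul, sq_abs]
    ring_nf
  simp_rw [integral_gaussianReal_eq_integral_smul one_ne_zero, hpdf]
  rw [integral_const_mul, integral_comp_abs (f := fun t ↦ t * exp (-(1 / 2) * t ^ 2)),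
    integral_Ioi_mul_exp_neg_mul_sq (by norm_num),
    show (2 : ℝ) / π = 2 ^ 2 / (2 * π) by ring, sqrt_div' _ (by positivity),
    sqrt_sq zero_le_two]
  ring

section InnerProductSpace

variable {E : Type*} [NormedAddCommGroup E] [InnerProductSpace ℝ E] [FiniteDimensional ℝ E]
  [MeasurableSpace E] [BorelSpace E]

-- In this section `stdGaussian E` is Mathlib's `ProbabilityTheory.stdGaussian`, the standard
-- Gaussian measure on `E`, not the `ℕ`-indexed measure above.

lemma hasGaussianLaw_inner_stdGaussian (x : E) :
    HasGaussianLaw (fun a ↦ ⟪x, a⟫) (stdGaussian E) :=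
  IsGaussian.hasGaussianLaw_id.map_fun (innerSL ℝ x)

lemma integral_inner_stdGaussian (x : E) : ∫ a, ⟪x, a⟫ ∂stdGaussian E = 0 := by
  simpa using integral_strongDual_stdGaussian (innerSL ℝ x)

lemma map_inner_stdGaussian (x : E) :
    (stdGaussian E).map (fun a ↦ ⟪x, a⟫) = gaussianReal 0 (‖x‖₊ ^ 2) := by
  have hvar : Var[fun a ↦ ⟪x, a⟫; stdGaussian E] = ‖x‖ ^ 2 := by
    simpa using variance_dual_stdGaussian (innerSL ℝ x)
  rw [(hasGaussianLaw_inner_stdGaussian x).map_eq_gaussianReal, integral_inner_stdGaussian, hvar]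
  congr
  ext
  simp

lemma indepFun_inner_stdGaussian {x w : E} (hxw : ⟪x, w⟫ = 0) :
    IndepFun (fun a ↦ ⟪x, a⟫) (fun a ↦ ⟪w, a⟫) (stdGaussian E) := by
  have h : HasGaussianLaw (fun a : E ↦ (⟪x, a⟫, ⟪w, a⟫)) (stdGaussian E) :=
    IsGaussian.hasGaussianLaw_id.map_fun ((innerSL ℝ x).prod (innerSL ℝ w))
  refine h.indepFun_of_covariance_eq_zero ?_
  rw [← covarianceBilin_apply_eq_cov IsGaussian.memLp_two_id, covarianceBilin_stdGaussian]
  exact hxw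

lemma integral_abs_inner_stdGaussian {x : E} (hx : ‖x‖ = 1) :
    ∫ a, |⟪x, a⟫| ∂stdGaussian E = √(2 / π) := by
  have hx' : ‖x‖₊ ^ 2 = 1 := by ext; simp [hx]
  rw [← integral_abs_gaussianReal, ← hx', ← map_inner_stdGaussian,
    integral_map (by fun_prop) (by fun_prop)]

theorem integral_sign_inner_mul_inner_stdGaussian {x : E} (hx : ‖x‖ = 1) (v : E) :
    ∫ a, Real.sign ⟪x, a⟫ * ⟪v, a⟫ ∂stdGaussian E = √(2 / π) * ⟪x, v⟫ := by
  set w := v - ⟪x, v⟫ • x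
  have hxw : ⟪x, w⟫ = 0 := by simp [w, inner_sub_right, inner_smul_right, hx]
  have hdecomp : ∀ a, Real.sign ⟪x, a⟫ * ⟪v, a⟫
      = ⟪x, v⟫ * |⟪x, a⟫| + Real.sign ⟪x, a⟫ * ⟪w, a⟫ := fun a ↦ by
    simp only [w, inner_sub_left, inner_smul_left, conj_trivial, ← Real.sign_mul_self_eq_abs]
    ring
  have hint_sign : Integrable (fun a ↦ Real.sign ⟪x, a⟫ * ⟪w, a⟫) (stdGaussian E) := by
    refine (hasGaussianLaw_inner_stdGaussian w).integrable.norm.mono' (by fun_prop)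
      (.of_forall fun a ↦ ?_)
    rw [norm_mul, Real.norm_eq_abs, Real.norm_eq_abs]
    exact mul_le_of_le_one_left (abs_nonneg _) (Real.abs_sign_le_one _)
  have hindep : ∫ a, Real.sign ⟪x, a⟫ * ⟪w, a⟫ ∂stdGaussian E
      = (∫ a, Real.sign ⟪x, a⟫ ∂stdGaussian E) * ∫ a, ⟪w, a⟫ ∂stdGaussian E :=
    (indepFun_inner_stdGaussian hxw).integral_fun_comp_mul_comp (f := Real.sign) (g := id)
      (by fun_prop) (by fun_prop) (by fun_prop) (by fun_prop)
  simp_rw [hdecomp]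
  rw [integral_add ((hasGaussianLaw_inner_stdGaussian x).integrable.abs.const_mul _) hint_sign,
    integral_const_mul, integral_abs_inner_stdGaussian hx, hindep, integral_inner_stdGaussian,
    mul_zero, add_zero, mul_comm]

end InnerProductSpace

/-- For `a ~ N(0, I_n)` and a unit vector `x`, `E[sign(aᵀx) · a] = √(2/π) · x`
(coordinatewise). -/
theorem stmt0 (n : ℕ) (x : Fin n → ℝ) (hx : ∑ i, x i ^ 2 = 1) (i : Fin n) :
    ∫ a, Real.sign (∑ j, a j * x j) * a i ∂(stdGaussian n)
      = Real.sqrt (2 / π) * x i := by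
  have hx' : ‖WithLp.toLp 2 x‖ = 1 := by simp [EuclideanSpace.norm_eq, hx]
  have key := integral_sign_inner_mul_inner_stdGaussian hx' (EuclideanSpace.single i 1)
  rw [← map_pi_eq_stdGaussian, integral_map (by fun_prop) (by fun_prop)] at key
  simpa [_root_.stdGaussian, PiLp.inner_apply, mul_comm] using key
end

section
/- Fix δ > 0 and let Q_δ(a) = δ(⌊a/δ⌋ + 1/2) be the uniform quantizer with resolution δ. If τ is uniformly distributed on [-δ/2, δ/2], then for every a ∈ R, E[Q_δ(a + τ)] = a. -/
/-!
Writing `Q δ x = x + δ (1/2 - fract (x/δ))`, the quantization error is a sawtooth of period `δ`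
whose mean over any window of length `δ` is zero, because `fract` is `1`-periodic with mean `1/2`.
Averaging `Q δ (a + τ)` over `τ ∈ [-δ/2, δ/2]` therefore gives the mean of `x` over
`[a - δ/2, a + δ/2]`, which is `a`.
-/

open MeasureTheory Real

/-- The uniform quantizer with resolution `δ`: `Q_δ(a) = δ(⌊a/δ⌋ + 1/2)`. -/
noncomputable def Q (δ a : ℝ) : ℝ := δ * (⌊a / δ⌋ + 1 / 2)

/-- The uniform distribution on `[a, b]`. -/
noncomputable def unif (a b : ℝ) : Measure ℝ :=
  (ENNReal.ofReal (b - a))⁻¹ • volume.restrict (Set.Icc a b)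

lemma integral_fract_add_one (c : ℝ) : ∫ t in c..c + 1, Int.fract t = 1 / 2 := by
  have hfract : Set.EqOn Int.fract id (Set.Ioo (0 : ℝ) 1) := fun t ht =>
    Int.fract_eq_self.2 ⟨ht.1.le, ht.2⟩
  rw [(Int.fract_periodic ℝ).intervalIntegral_add_eq c 0, zero_add,
    intervalIntegral.integral_of_le zero_le_one, integral_Ioc_eq_integral_Ioo,
    setIntegral_congr_fun measurableSet_Ioo hfract, ← integral_Ioc_eq_integral_Ioo,
    ← intervalIntegral.integral_of_le zero_le_one]
  norm_num [integral_id]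

lemma intervalIntegrable_fract_div (δ a b : ℝ) :
    IntervalIntegrable (fun x => Int.fract (x / δ)) volume a b :=
  (intervalIntegrable_const (c := (1 : ℝ))).mono_fun'
    (measurable_fract.comp (measurable_id.div_const δ)).aestronglyMeasurable
    (ae_of_all _ fun x => by
      simpa [abs_of_nonneg (Int.fract_nonneg (x / δ))] using (Int.fract_lt_one (x / δ)).le)

lemma integral_fract_div (δ c : ℝ) (hδ : δ ≠ 0) :
    ∫ x in c..c + δ, Int.fract (x / δ) = δ / 2 := by
  rw [intervalIntegral.integral_comp_div _ hδ, add_div, div_self hδ, integral_fract_add_one,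
    smul_eq_mul]
  ring

lemma Q_eq_add_sub_fract (δ x : ℝ) (hδ : δ ≠ 0) :
    Q δ x = x + δ * (1 / 2 - Int.fract (x / δ)) := by
  rw [Q, Int.fract, mul_sub, mul_sub, mul_div_cancel₀ _ hδ]
  ring

lemma integral_Q_period (δ c : ℝ) (hδ : δ ≠ 0) :
    ∫ x in c..c + δ, Q δ x = δ * (c + δ / 2) := by
  have hfract := intervalIntegrable_fract_div δ c (c + δ)
  simp_rw [Q_eq_add_sub_fract _ _ hδ]
  rw [intervalIntegral.integral_add intervalIntegral.intervalIntegrable_id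
      (intervalIntegrable_const.sub hfract |>.const_mul δ),
    intervalIntegral.integral_const_mul,
    intervalIntegral.integral_sub intervalIntegrable_const hfract,
    integral_fract_div δ c hδ, integral_id, intervalIntegral.integral_const, smul_eq_mul]
  ring

lemma integral_unif (a b : ℝ) (hab : a < b) (f : ℝ → ℝ) :
    ∫ x, f x ∂(unif a b) = (b - a)⁻¹ * ∫ x in a..b, f x := by
  have hba : 0 < b - a := sub_pos.2 hab
  rw [unif, integral_smul_measure, integral_Icc_eq_integral_Ioc,
    ← intervalIntegral.integral_of_le hab.le, ← ENNReal.ofReal_inv_of_pos hba,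
    ENNReal.toReal_ofReal (inv_nonneg.2 hba.le), smul_eq_mul]

/-- Dithered uniform quantization is unbiased: if `τ ~ Uniform[-δ/2, δ/2]`, then
for every `a ∈ ℝ`, `E[Q_δ(a + τ)] = a`. -/
theorem stmt2 (δ : ℝ) (hδ : 0 < δ) (a : ℝ) :
    ∫ τ, Q δ (a + τ) ∂(unif (-(δ / 2)) (δ / 2)) = a := by
  rw [integral_unif _ _ (by linarith), intervalIntegral.integral_comp_add_left (Q δ),
    show a + δ / 2 = a + -(δ / 2) + δ by ring, integral_Q_period δ _ hδ.ne']
  field_simp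
  ring
end

section
/- Let f : R → R satisfy: its set of discontinuities D_f is at most countable, all discontinuities are jump discontinuities with jump at most B₀, f is L₀-Lipschitz on every open interval disjoint from D_f, and any two distinct points of D_f are at distance at least β₀. For β ∈ (0, β₀/2), define the Lipschitz approximation f_β which agrees with f outside D_f + [-β/2, β/2] and linearly interpolates through the midpoint value fᵃ(x₀) = (f⁻(x₀) + f⁺(x₀))/2 on each interval [x₀ - β/2, x₀ + β/2] for x₀ ∈ D_f. Then f_β is (L₀ + B₀/β)-Lipschitz on all of R. -/
set_option maxHeartbeats 2000000


/-- Lipschitz continuity of the Lipschitz approximation `f_β`.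
`f` has at-most-countable discontinuity set `D`, all jumps bounded by `B₀`,
is `L₀`-Lipschitz on open intervals avoiding `D`, continuous off `D`, and the
points of `D` are `β₀`-separated. `flim`/`frim` are the one-sided limits of `f`
at points of `D`. The approximation `f_β` agrees with `f` outside
`D + [-β/2, β/2]` and interpolates linearly through the midpoint value
`fᵃ(x₀) = (f⁻(x₀) + f⁺(x₀))/2` on `[x₀ - β/2, x₀ + β/2]`. Then `f_β` is
`(L₀ + B₀/β)`-Lipschitz on all of `ℝ`. -/
theorem stmt10 (f fβ flim frim : ℝ → ℝ) (D : Set ℝ) (B₀ L₀ β₀ β : ℝ)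
    (hB : 0 ≤ B₀) (hL : 0 ≤ L₀) (hβ : 0 < β) (hββ : β < β₀ / 2)
    (hcount : D.Countable)
    (hsep : ∀ a ∈ D, ∀ b ∈ D, a ≠ b → β₀ ≤ |a - b|)
    (hcont : ∀ x ∉ D, ContinuousAt f x)
    (hleft : ∀ x₀ ∈ D,
      Filter.Tendsto f (nhdsWithin x₀ (Set.Iio x₀)) (nhds (flim x₀)))
    (hright : ∀ x₀ ∈ D,
      Filter.Tendsto f (nhdsWithin x₀ (Set.Ioi x₀)) (nhds (frim x₀)))
    (hjump : ∀ x₀ ∈ D, |frim x₀ - flim x₀| ≤ B₀)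
    (hlip : ∀ a b : ℝ, Set.Ioo a b ∩ D = ∅ →
      ∀ x ∈ Set.Ioo a b, ∀ y ∈ Set.Ioo a b, |f x - f y| ≤ L₀ * |x - y|)
    (hout : ∀ x : ℝ, (∀ x₀ ∈ D, β / 2 < |x - x₀|) → fβ x = f x)
    (hleftdef : ∀ x₀ ∈ D, ∀ x ∈ Set.Icc (x₀ - β / 2) x₀,
      fβ x = (flim x₀ + frim x₀) / 2
        - 2 * ((flim x₀ + frim x₀) / 2 - f (x₀ - β / 2)) * (x₀ - x) / β)
    (hrightdef : ∀ x₀ ∈ D, ∀ x ∈ Set.Icc x₀ (x₀ + β / 2),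
      fβ x = (flim x₀ + frim x₀) / 2
        + 2 * (f (x₀ + β / 2) - (flim x₀ + frim x₀) / 2) * (x - x₀) / β) :
    ∀ x y : ℝ, |fβ x - fβ y| ≤ (L₀ + B₀ / β) * |x - y| := by
  have hβ₀ : 0 < β₀ := by linarith
  set L := L₀ + B₀ / β with hLdef
  have hBβ : 0 ≤ B₀ / β := div_nonneg hB hβ.le
  have hL₀L : L₀ ≤ L := by rw [hLdef]; linarith
  have hLnn : 0 ≤ L := le_trans hL hL₀L
  have hLβ : L * β = B₀ + L₀ * β := by rw [hLdef]; field_simp; ring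
  -- agreement of fβ with f at points at distance ≥ β/2 from D
  have agree : ∀ z : ℝ, (∀ x₁ ∈ D, β / 2 ≤ |z - x₁|) → fβ z = f z := by
    intro z hz
    by_cases hex : ∃ x₁ ∈ D, |z - x₁| = β / 2
    · obtain ⟨x₁, hx₁D, heq⟩ := hex
      rcases (abs_eq (by positivity : (0:ℝ) ≤ β / 2)).mp heq with h | h
      · have hzmem : z ∈ Set.Icc x₁ (x₁ + β / 2) := ⟨by linarith, by linarith⟩
        rw [hrightdef x₁ hx₁D z hzmem, show x₁ + β / 2 = z by linarith, h]
        field_simp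
        ring
      · have hzmem : z ∈ Set.Icc (x₁ - β / 2) x₁ := ⟨by linarith, by linarith⟩
        rw [hleftdef x₁ hx₁D z hzmem, show x₁ - z = β / 2 by linarith,
          show x₁ - β / 2 = z by linarith]
        field_simp
        ring
    · push_neg at hex
      exact hout z fun x₀ hx₀ => lt_of_le_of_ne (hz x₀ hx₀) (Ne.symm (hex x₀ hx₀))
  -- one-sided limit estimates
  have hempty_left : ∀ x₀ ∈ D, Set.Ioo (x₀ - β₀) x₀ ∩ D = ∅ := by
    intro x₀ hx₀
    rw [Set.eq_empty_iff_forall_notMem]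
    rintro z ⟨⟨hz1, hz2⟩, hzD⟩
    have h1 := hsep z hzD x₀ hx₀ (ne_of_lt hz2)
    have h2 : |z - x₀| = x₀ - z := by rw [abs_sub_comm]; exact abs_of_nonneg (by linarith)
    linarith [h2 ▸ h1]
  have hempty_right : ∀ x₀ ∈ D, Set.Ioo x₀ (x₀ + β₀) ∩ D = ∅ := by
    intro x₀ hx₀
    rw [Set.eq_empty_iff_forall_notMem]
    rintro z ⟨⟨hz1, hz2⟩, hzD⟩
    have h1 := hsep z hzD x₀ hx₀ (ne_of_gt hz1)
    have h2 : |z - x₀| = z - x₀ := abs_of_nonneg (by linarith)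
    linarith [h2 ▸ h1]
  have hleftest : ∀ x₀ ∈ D, |flim x₀ - f (x₀ - β / 2)| ≤ L₀ * (β / 2) := by
    intro x₀ hx₀
    have hmem : Set.Ioo (x₀ - β₀) x₀ ∈ nhdsWithin x₀ (Set.Iio x₀) :=
      Ioo_mem_nhdsLT_of_mem ⟨by linarith, le_refl x₀⟩
    have hxm : x₀ - β / 2 ∈ Set.Ioo (x₀ - β₀) x₀ := ⟨by linarith, by linarith⟩
    have hbound : ∀ᶠ y in nhdsWithin x₀ (Set.Iio x₀),
        |f y - f (x₀ - β / 2)| ≤ L₀ * |y - (x₀ - β / 2)| := by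
      filter_upwards [hmem] with y hy
      exact hlip (x₀ - β₀) x₀ (hempty_left x₀ hx₀) y hy _ hxm
    have h1 : Filter.Tendsto (fun y => |f y - f (x₀ - β / 2)|)
        (nhdsWithin x₀ (Set.Iio x₀)) (nhds |flim x₀ - f (x₀ - β / 2)|) :=
      ((hleft x₀ hx₀).sub tendsto_const_nhds).abs
    have h2 : Filter.Tendsto (fun y : ℝ => L₀ * |y - (x₀ - β / 2)|)
        (nhdsWithin x₀ (Set.Iio x₀)) (nhds (L₀ * |x₀ - (x₀ - β / 2)|)) :=
      Filter.Tendsto.mono_left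
        (Continuous.tendsto (continuous_const.mul ((continuous_id.sub continuous_const).abs)) x₀) nhdsWithin_le_nhds
    have hfin := le_of_tendsto_of_tendsto h1 h2 hbound
    rwa [show x₀ - (x₀ - β / 2) = β / 2 by ring,
      abs_of_nonneg (by positivity : (0:ℝ) ≤ β / 2)] at hfin
  have hrightest : ∀ x₀ ∈ D, |frim x₀ - f (x₀ + β / 2)| ≤ L₀ * (β / 2) := by
    intro x₀ hx₀
    have hmem : Set.Ioo x₀ (x₀ + β₀) ∈ nhdsWithin x₀ (Set.Ioi x₀) :=
      Ioo_mem_nhdsGT_of_mem ⟨le_refl x₀, by linarith⟩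
    have hxm : x₀ + β / 2 ∈ Set.Ioo x₀ (x₀ + β₀) := ⟨by linarith, by linarith⟩
    have hbound : ∀ᶠ y in nhdsWithin x₀ (Set.Ioi x₀),
        |f y - f (x₀ + β / 2)| ≤ L₀ * |y - (x₀ + β / 2)| := by
      filter_upwards [hmem] with y hy
      exact hlip x₀ (x₀ + β₀) (hempty_right x₀ hx₀) y hy _ hxm
    have h1 : Filter.Tendsto (fun y => |f y - f (x₀ + β / 2)|)
        (nhdsWithin x₀ (Set.Ioi x₀)) (nhds |frim x₀ - f (x₀ + β / 2)|) :=
      ((hright x₀ hx₀).sub tendsto_const_nhds).abs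
    have h2 : Filter.Tendsto (fun y : ℝ => L₀ * |y - (x₀ + β / 2)|)
        (nhdsWithin x₀ (Set.Ioi x₀)) (nhds (L₀ * |x₀ - (x₀ + β / 2)|)) :=
      Filter.Tendsto.mono_left
        (Continuous.tendsto (continuous_const.mul ((continuous_id.sub continuous_const).abs)) x₀) nhdsWithin_le_nhds
    have hfin := le_of_tendsto_of_tendsto h1 h2 hbound
    rwa [show x₀ - (x₀ + β / 2) = -(β / 2) by ring, abs_neg,
      abs_of_nonneg (by positivity : (0:ℝ) ≤ β / 2)] at hfin
  -- midpoint estimates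
  have hcL : ∀ x₀ ∈ D, |(flim x₀ + frim x₀) / 2 - f (x₀ - β / 2)| ≤ (B₀ + L₀ * β) / 2 := by
    intro x₀ hx₀
    rw [show (flim x₀ + frim x₀) / 2 - f (x₀ - β / 2)
        = (frim x₀ - flim x₀) / 2 + (flim x₀ - f (x₀ - β / 2)) by ring]
    have h1 := abs_add_le ((frim x₀ - flim x₀) / 2) (flim x₀ - f (x₀ - β / 2))
    have h2 : |(frim x₀ - flim x₀) / 2| = |frim x₀ - flim x₀| / 2 := by
      rw [abs_div, abs_two]
    linarith [hjump x₀ hx₀, hleftest x₀ hx₀]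
  have hcR : ∀ x₀ ∈ D, |f (x₀ + β / 2) - (flim x₀ + frim x₀) / 2| ≤ (B₀ + L₀ * β) / 2 := by
    intro x₀ hx₀
    rw [show f (x₀ + β / 2) - (flim x₀ + frim x₀) / 2
        = (frim x₀ - flim x₀) / 2 + (f (x₀ + β / 2) - frim x₀) by ring]
    have h1 := abs_add_le ((frim x₀ - flim x₀) / 2) (f (x₀ + β / 2) - frim x₀)
    have h2 : |(frim x₀ - flim x₀) / 2| = |frim x₀ - flim x₀| / 2 := by
      rw [abs_div, abs_two]
    have h3 : |f (x₀ + β / 2) - frim x₀| = |frim x₀ - f (x₀ + β / 2)| := abs_sub_comm _ _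
    linarith [hjump x₀ hx₀, hrightest x₀ hx₀]
  -- Lipschitz bound on each linear half-piece
  have nearL : ∀ x₀ ∈ D, ∀ x ∈ Set.Icc (x₀ - β / 2) x₀, ∀ y ∈ Set.Icc (x₀ - β / 2) x₀,
      |fβ x - fβ y| ≤ L * |x - y| := by
    intro x₀ hx₀ x hx y hy
    have hsub : fβ x - fβ y
        = 2 * ((flim x₀ + frim x₀) / 2 - f (x₀ - β / 2)) * (x - y) / β := by
      rw [hleftdef x₀ hx₀ x hx, hleftdef x₀ hx₀ y hy]; ring
    rw [hsub, abs_div, abs_of_pos hβ, abs_mul, abs_mul, abs_two, div_le_iff₀ hβ]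
    have h2c : 2 * |(flim x₀ + frim x₀) / 2 - f (x₀ - β / 2)| ≤ L * β := by
      rw [hLβ]; linarith [hcL x₀ hx₀]
    calc 2 * |(flim x₀ + frim x₀) / 2 - f (x₀ - β / 2)| * |x - y|
        ≤ (L * β) * |x - y| := mul_le_mul_of_nonneg_right h2c (abs_nonneg _)
      _ = L * |x - y| * β := by ring
  have nearR : ∀ x₀ ∈ D, ∀ x ∈ Set.Icc x₀ (x₀ + β / 2), ∀ y ∈ Set.Icc x₀ (x₀ + β / 2),
      |fβ x - fβ y| ≤ L * |x - y| := by
    intro x₀ hx₀ x hx y hy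
    have hsub : fβ x - fβ y
        = 2 * (f (x₀ + β / 2) - (flim x₀ + frim x₀) / 2) * (x - y) / β := by
      rw [hrightdef x₀ hx₀ x hx, hrightdef x₀ hx₀ y hy]; ring
    rw [hsub, abs_div, abs_of_pos hβ, abs_mul, abs_mul, abs_two, div_le_iff₀ hβ]
    have h2c : 2 * |f (x₀ + β / 2) - (flim x₀ + frim x₀) / 2| ≤ L * β := by
      rw [hLβ]; linarith [hcR x₀ hx₀]
    calc 2 * |f (x₀ + β / 2) - (flim x₀ + frim x₀) / 2| * |x - y|
        ≤ (L * β) * |x - y| := mul_le_mul_of_nonneg_right h2c (abs_nonneg _)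
      _ = L * |x - y| * β := by ring
  -- Lipschitz bound on the whole interval around a discontinuity
  have near : ∀ x₀ ∈ D, ∀ x ∈ Set.Icc (x₀ - β / 2) (x₀ + β / 2),
      ∀ y ∈ Set.Icc (x₀ - β / 2) (x₀ + β / 2), |fβ x - fβ y| ≤ L * |x - y| := by
    intro x₀ hx₀ x hx y hy
    rcases le_total x x₀ with h1 | h1 <;> rcases le_total y x₀ with h2 | h2
    · exact nearL x₀ hx₀ x ⟨hx.1, h1⟩ y ⟨hy.1, h2⟩
    · have ha := nearL x₀ hx₀ x ⟨hx.1, h1⟩ x₀ ⟨by linarith, le_refl _⟩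
      have hb := nearR x₀ hx₀ x₀ ⟨le_refl _, by linarith⟩ y ⟨h2, hy.2⟩
      rw [show |x - x₀| = x₀ - x by rw [abs_sub_comm]; exact abs_of_nonneg (by linarith)] at ha
      rw [show |x₀ - y| = y - x₀ by rw [abs_sub_comm]; exact abs_of_nonneg (by linarith)] at hb
      rw [show |x - y| = y - x by rw [abs_sub_comm]; exact abs_of_nonneg (by linarith)]
      calc |fβ x - fβ y| ≤ |fβ x - fβ x₀| + |fβ x₀ - fβ y| := abs_sub_le _ _ _
        _ ≤ L * (x₀ - x) + L * (y - x₀) := add_le_add ha hb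
        _ = L * (y - x) := by ring
    · have ha := nearR x₀ hx₀ x ⟨h1, hx.2⟩ x₀ ⟨le_refl _, by linarith⟩
      have hb := nearL x₀ hx₀ x₀ ⟨by linarith, le_refl _⟩ y ⟨hy.1, h2⟩
      rw [show |x - x₀| = x - x₀ from abs_of_nonneg (by linarith)] at ha
      rw [show |x₀ - y| = x₀ - y from abs_of_nonneg (by linarith)] at hb
      rw [show |x - y| = x - y from abs_of_nonneg (by linarith)]
      calc |fβ x - fβ y| ≤ |fβ x - fβ x₀| + |fβ x₀ - fβ y| := abs_sub_le _ _ _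
        _ ≤ L * (x - x₀) + L * (x₀ - y) := add_le_add ha hb
        _ = L * (x - y) := by ring
    · exact nearR x₀ hx₀ x ⟨h1, hx.2⟩ y ⟨h2, hy.2⟩
  -- far-from-D Lipschitz bound
  have far : ∀ x y : ℝ, x ≤ y → (∀ x₁ ∈ D, x₁ ≤ x - β / 2 ∨ y + β / 2 ≤ x₁) →
      |fβ x - fβ y| ≤ L₀ * (y - x) := by
    intro x y hxy hfar
    have hax : fβ x = f x := agree x (by
      intro x₁ hx₁
      rcases hfar x₁ hx₁ with h | h
      · rw [abs_of_nonneg (by linarith : (0:ℝ) ≤ x - x₁)]; linarith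
      · rw [abs_sub_comm, abs_of_nonneg (by linarith : (0:ℝ) ≤ x₁ - x)]; linarith)
    have hay : fβ y = f y := agree y (by
      intro x₁ hx₁
      rcases hfar x₁ hx₁ with h | h
      · rw [abs_of_nonneg (by linarith : (0:ℝ) ≤ y - x₁)]; linarith
      · rw [abs_sub_comm, abs_of_nonneg (by linarith : (0:ℝ) ≤ x₁ - y)]; linarith)
    have hemp : Set.Ioo (x - β / 2) (y + β / 2) ∩ D = ∅ := by
      rw [Set.eq_empty_iff_forall_notMem]
      rintro z ⟨⟨hz1, hz2⟩, hzD⟩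
      rcases hfar z hzD with h | h <;> linarith
    rw [hax, hay]
    have := hlip _ _ hemp x ⟨by linarith, by linarith⟩ y ⟨by linarith, by linarith⟩
    rwa [show |x - y| = y - x by rw [abs_sub_comm]; exact abs_of_nonneg (by linarith)] at this
  -- Lipschitz bound for nearby points
  have small : ∀ x y : ℝ, x ≤ y → y - x ≤ β / 2 → |fβ x - fβ y| ≤ L * (y - x) := by
    intro x y hxy hd
    have exy : |x - y| = y - x := by rw [abs_sub_comm]; exact abs_of_nonneg (by linarith)
    have hmono : L₀ * (y - x) ≤ L * (y - x) := mul_le_mul_of_nonneg_right hL₀L (by linarith)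
    by_cases hex : ∃ x₀ ∈ D, x - β / 2 < x₀ ∧ x₀ < y + β / 2
    case neg =>
      push_neg at hex
      have hfin := far x y hxy (fun x₁ hx₁ => by
        by_cases h : x - β / 2 < x₁
        · exact Or.inr (hex x₁ hx₁ h)
        · exact Or.inl (le_of_not_gt h))
      linarith
    case pos =>
    obtain ⟨x₀, hx₀D, hw1, hw2⟩ := hex
    have huniq : ∀ x₁ ∈ D, x - β / 2 < x₁ → x₁ < y + β / 2 → x₁ = x₀ := by
      intro x₁ hx₁D h1 h2
      by_contra hne
      have hs := hsep x₁ hx₁D x₀ hx₀D hne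
      rcases abs_cases (x₁ - x₀) with ⟨heq, _⟩ | ⟨heq, _⟩ <;> rw [heq] at hs <;> linarith
    have caseL : ∀ v, x ≤ v → v ≤ y → v ≤ x₀ - β / 2 → |fβ x - fβ v| ≤ L₀ * (v - x) := by
      intro v hv1 hv2 hv3
      have key : ∀ z, x ≤ z → z ≤ v → (∀ x₁ ∈ D, β / 2 ≤ |z - x₁|) := by
        intro z h1 h2 x₁ hx₁
        by_cases h3 : x - β / 2 < x₁
        · by_cases h4 : x₁ < y + β / 2
          · have := huniq x₁ hx₁ h3 h4
            subst this
            rw [abs_sub_comm, abs_of_nonneg (by linarith)]; linarith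
          · push_neg at h4
            rw [abs_sub_comm, abs_of_nonneg (by linarith)]; linarith
        · push_neg at h3
          rw [abs_of_nonneg (by linarith)]; linarith
      have hax := agree x (key x le_rfl hv1)
      have hav := agree v (key v hv1 le_rfl)
      have hemp : Set.Ioo (x - β / 2) x₀ ∩ D = ∅ := by
        rw [Set.eq_empty_iff_forall_notMem]
        rintro z ⟨⟨hz1, hz2⟩, hzD⟩
        exact absurd (huniq z hzD hz1 (by linarith)) (ne_of_lt hz2)
      rw [hax, hav]
      have := hlip _ _ hemp x ⟨by linarith, by linarith⟩ v ⟨by linarith, by linarith⟩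
      rwa [show |x - v| = v - x by rw [abs_sub_comm]; exact abs_of_nonneg (by linarith)] at this
    have caseR : ∀ u, x ≤ u → u ≤ y → x₀ + β / 2 ≤ u → |fβ u - fβ y| ≤ L₀ * (y - u) := by
      intro u hu1 hu2 hu3
      have key : ∀ z, u ≤ z → z ≤ y → (∀ x₁ ∈ D, β / 2 ≤ |z - x₁|) := by
        intro z h1 h2 x₁ hx₁
        by_cases h3 : x - β / 2 < x₁
        · by_cases h4 : x₁ < y + β / 2
          · have := huniq x₁ hx₁ h3 h4
            subst this
            rw [abs_of_nonneg (by linarith)]; linarith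
          · push_neg at h4
            rw [abs_sub_comm, abs_of_nonneg (by linarith)]; linarith
        · push_neg at h3
          rw [abs_of_nonneg (by linarith)]; linarith
      have hau := agree u (key u le_rfl hu2)
      have hay := agree y (key y hu2 le_rfl)
      have hemp : Set.Ioo x₀ (y + β / 2) ∩ D = ∅ := by
        rw [Set.eq_empty_iff_forall_notMem]
        rintro z ⟨⟨hz1, hz2⟩, hzD⟩
        exact absurd (huniq z hzD (by linarith) hz2) (ne_of_gt hz1)
      rw [hau, hay]
      have := hlip _ _ hemp u ⟨by linarith, by linarith⟩ y ⟨by linarith, by linarith⟩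
      rwa [show |u - y| = y - u by rw [abs_sub_comm]; exact abs_of_nonneg (by linarith)] at this
    rcases le_or_gt y (x₀ - β / 2) with h1 | h1
    · linarith [caseL y hxy le_rfl h1]
    · rcases le_or_gt (x₀ + β / 2) x with h2 | h2
      · linarith [caseR x le_rfl hxy h2]
      · rcases le_or_gt (x₀ - β / 2) x with h3 | h3
        · rcases le_or_gt y (x₀ + β / 2) with h4 | h4
          · have hfin := near x₀ hx₀D x ⟨h3, h2.le⟩ y ⟨by linarith, h4⟩
            rwa [exy] at hfin
          · -- glue at x₀ + β/2
            have ha := near x₀ hx₀D x ⟨h3, h2.le⟩ (x₀ + β / 2) ⟨by linarith, le_rfl⟩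
            have hb := caseR (x₀ + β / 2) h2.le h4.le le_rfl
            rw [show |x - (x₀ + β / 2)| = (x₀ + β / 2) - x by
              rw [abs_sub_comm]; exact abs_of_nonneg (by linarith)] at ha
            have hb' : |fβ (x₀ + β / 2) - fβ y| ≤ L * (y - (x₀ + β / 2)) := by
              have := mul_le_mul_of_nonneg_right hL₀L (by linarith : (0:ℝ) ≤ y - (x₀ + β / 2))
              linarith
            calc |fβ x - fβ y| ≤ |fβ x - fβ (x₀ + β / 2)| + |fβ (x₀ + β / 2) - fβ y| :=
                abs_sub_le _ _ _
              _ ≤ L * ((x₀ + β / 2) - x) + L * (y - (x₀ + β / 2)) := add_le_add ha hb'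
              _ = L * (y - x) := by ring
        · -- x < x₀ - β/2 ; then y < x₀ since y ≤ x + β/2
          have ha := caseL (x₀ - β / 2) h3.le (by linarith) le_rfl
          have hb := near x₀ hx₀D (x₀ - β / 2) ⟨le_rfl, by linarith⟩ y ⟨h1.le, by linarith⟩
          rw [show |x₀ - β / 2 - y| = y - (x₀ - β / 2) by
            rw [abs_sub_comm]; exact abs_of_nonneg (by linarith)] at hb
          have ha' : |fβ x - fβ (x₀ - β / 2)| ≤ L * ((x₀ - β / 2) - x) := by
            have := mul_le_mul_of_nonneg_right hL₀L (by linarith : (0:ℝ) ≤ (x₀ - β / 2) - x)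
            linarith
          calc |fβ x - fβ y| ≤ |fβ x - fβ (x₀ - β / 2)| + |fβ (x₀ - β / 2) - fβ y| :=
              abs_sub_le _ _ _
            _ ≤ L * ((x₀ - β / 2) - x) + L * (y - (x₀ - β / 2)) := add_le_add ha' hb
            _ = L * (y - x) := by ring
  -- global bound by subdivision
  have main : ∀ x y : ℝ, x ≤ y → |fβ x - fβ y| ≤ L * (y - x) := by
    intro x y hxy
    rcases eq_or_lt_of_le hxy with rfl | hlt
    · simp
    · obtain ⟨n, hceil⟩ := exists_nat_gt ((y - x) / (β / 2))
      have hnR : (0:ℝ) < n := lt_trans (div_pos (by linarith) (by linarith)) hceil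
      have hsle : (y - x) / n ≤ β / 2 := by
        rw [div_le_iff₀ hnR]
        rw [div_lt_iff₀ (by linarith : (0:ℝ) < β / 2)] at hceil
        nlinarith
      set s := (y - x) / n with hs
      have hspos : 0 < s := div_pos (by linarith) hnR
      set g : ℕ → ℝ := fun i => x + i * s with hg
      have hstep : ∀ i : ℕ, g (i + 1) - g i = s := by
        intro i; simp only [hg]; push_cast; ring
      have hg0 : g 0 = x := by simp [hg]
      have hgn : g n = y := by
        simp only [hg, hs]
        rw [mul_div_cancel₀ _ (ne_of_gt hnR)]; ring
      have tele : fβ y - fβ x = ∑ i ∈ Finset.range n, (fβ (g (i + 1)) - fβ (g i)) := by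
        rw [Finset.sum_range_sub (fun i => fβ (g i)) n, hg0, hgn]
      have hbound : ∀ i ∈ Finset.range n, |fβ (g (i + 1)) - fβ (g i)| ≤ L * s := by
        intro i _
        have h1 : g i ≤ g (i + 1) := by linarith [hstep i]
        have h2 : g (i + 1) - g i ≤ β / 2 := by rw [hstep i]; exact hsle
        have := small (g i) (g (i + 1)) h1 h2
        rw [hstep i] at this
        rwa [abs_sub_comm]
      calc |fβ x - fβ y| = |fβ y - fβ x| := abs_sub_comm _ _
        _ = |∑ i ∈ Finset.range n, (fβ (g (i + 1)) - fβ (g i))| := by rw [tele]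
        _ ≤ ∑ i ∈ Finset.range n, |fβ (g (i + 1)) - fβ (g i)| :=
            Finset.abs_sum_le_sum_abs _ _
        _ ≤ ∑ _i ∈ Finset.range n, L * s := Finset.sum_le_sum hbound
        _ = (n:ℝ) * (L * s) := by
            rw [Finset.sum_const, Finset.card_range, nsmul_eq_mul]
        _ = L * (y - x) := by
            rw [hs, mul_comm (n:ℝ), mul_assoc, div_mul_cancel₀ _ (ne_of_gt hnR)]
  intro x y
  rcases le_total x y with h | h
  · have hfin := main x y h
    rwa [show |x - y| = y - x by rw [abs_sub_comm]; exact abs_of_nonneg (by linarith)]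
  · have hfin := main y x h
    rw [abs_sub_comm]
    rwa [show |x - y| = x - y from abs_of_nonneg (by linarith)]
end
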